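/- arXiv:2312.11452 — 9 statements merged into one kernel-verified Lean document; each statement's English description precedes it below -/
import Mathlib

section
/- Let n ≥ 2, let H be an n×n real symmetric positive definite matrix, let Q_m be an n×n real matrix such that Q_m + Q_mᵀ is positive semidefinite, let B = diag(−1, 0, …, 0, 1), and set D_m = H⁻¹(Q_m + B/2). Let e₀ = (1,0,…,0)ᵀ ∈ ℝⁿ and let τ ≤ −1/2. If u : ℝ → ℝⁿ is differentiable and satisfies the semidiscretization u'(t) = −D_m u(t) + τ H⁻¹ e₀ (u(t))₁ for all t (homogeneous boundary data g ≡ 0), then the discrete energy t ↦ u(t)ᵀ H u(t) is nonincreasing: its derivative is ≤ 0 for all t. -/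
/-!
Since `H` is symmetric, the energy `uᵀHu` has derivative `2 uᵀHu'`, and multiplying the
semidiscretization by `H` cancels `H⁻¹`: `Hu' = -(Q_m + B/2) u + τ u₁ e₀`. The rate is therefore
`-uᵀ(Q_m + Q_mᵀ)u - uᵀBu + 2τ u₁² = -uᵀ(Q_m + Q_mᵀ)u - u_n² + (1 + 2τ) u₁²`, a sum of
nonpositive terms once `τ ≤ -1/2`.
-/

open Matrix

variable {ι : Type*} [Fintype ι]

theorem HasDerivAt.dotProduct {u w : ℝ → ι → ℝ} {u' w' : ι → ℝ} {t : ℝ}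
    (hu : HasDerivAt u u' t) (hw : HasDerivAt w w' t) :
    HasDerivAt (fun s => u s ⬝ᵥ w s) (u' ⬝ᵥ w t + u t ⬝ᵥ w') t := by
  unfold _root_.dotProduct
  rw [← Finset.sum_add_distrib]
  exact HasDerivAt.fun_sum fun i _ => (hasDerivAt_pi.1 hu i).mul (hasDerivAt_pi.1 hw i)

theorem HasDerivAt.mulVec (A : Matrix ι ι ℝ) {u : ℝ → ι → ℝ} {u' : ι → ℝ} {t : ℝ}
    (hu : HasDerivAt u u' t) : HasDerivAt (fun s => A *ᵥ u s) (A *ᵥ u') t :=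
  A.mulVecLin.toContinuousLinearMap.hasFDerivAt.comp_hasDerivAt t hu

theorem Matrix.IsSymm.dotProduct_mulVec_comm {A : Matrix ι ι ℝ} (hA : A.IsSymm) (v w : ι → ℝ) :
    v ⬝ᵥ (A *ᵥ w) = w ⬝ᵥ (A *ᵥ v) := by
  rw [dotProduct_mulVec, ← mulVec_transpose, hA.eq, dotProduct_comm]

theorem Matrix.IsSymm.hasDerivAt_dotProduct_mulVec_self {A : Matrix ι ι ℝ} (hA : A.IsSymm)
    {u : ℝ → ι → ℝ} {u' : ι → ℝ} {t : ℝ} (hu : HasDerivAt u u' t) :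
    HasDerivAt (fun s => u s ⬝ᵥ (A *ᵥ u s)) (2 * (u t ⬝ᵥ (A *ᵥ u'))) t := by
  convert hu.dotProduct (hu.mulVec A) using 1
  rw [hA.dotProduct_mulVec_comm u', two_mul]

theorem dotProduct_add_transpose_mulVec (A : Matrix ι ι ℝ) (v : ι → ℝ) :
    v ⬝ᵥ ((A + Aᵀ) *ᵥ v) = 2 * (v ⬝ᵥ (A *ᵥ v)) := by
  rw [add_mulVec, dotProduct_add, mulVec_transpose, dotProduct_mulVec v A v,
    dotProduct_comm (v ᵥ* A), two_mul]

theorem dotProduct_diagonal_mulVec [DecidableEq ι] (d v : ι → ℝ) :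
    v ⬝ᵥ (diagonal d *ᵥ v) = ∑ i, d i * v i ^ 2 := by
  simp only [dotProduct, mulVec_diagonal]
  exact Finset.sum_congr rfl fun i _ => by ring

theorem dotProduct_diagonal_single_sub_single_mulVec [DecidableEq ι] (i j : ι) (v : ι → ℝ) :
    v ⬝ᵥ (diagonal (Pi.single j 1 - Pi.single i 1) *ᵥ v) = v j ^ 2 - v i ^ 2 := by
  simp [dotProduct_diagonal_mulVec, sub_mul, Finset.sum_sub_distrib, Pi.single_apply]

theorem Matrix.mulVec_nonsing_inv_mulVec [DecidableEq ι] {A : Matrix ι ι ℝ} (hA : IsUnit A.det)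
    (v : ι → ℝ) : A *ᵥ (A⁻¹ *ᵥ v) = v := by
  rw [mulVec_mulVec, mul_nonsing_inv A hA, one_mulVec]

theorem energy_rate_upwind_sbp_sat [DecidableEq ι] {H : Matrix ι ι ℝ} (hH : IsUnit H.det)
    (Q B : Matrix ι ι ℝ) (v e : ι → ℝ) (c : ℝ) :
    2 * (v ⬝ᵥ (H *ᵥ (-((H⁻¹ * (Q + (1/2 : ℝ) • B)) *ᵥ v) + c • (H⁻¹ *ᵥ e)))) =
      -(v ⬝ᵥ ((Q + Qᵀ) *ᵥ v)) - v ⬝ᵥ (B *ᵥ v) + 2 * c * (v ⬝ᵥ e) := by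
  rw [← mulVec_mulVec, ← mulVec_smul, ← mulVec_neg, ← mulVec_add,
    H.mulVec_nonsing_inv_mulVec hH, dotProduct_add_transpose_mulVec]
  simp only [dotProduct_add, dotProduct_neg, dotProduct_smul, add_mulVec, smul_mulVec,
    smul_eq_mul]
  ring

theorem boundary_diagonal_eq_single_sub_single {n : ℕ} (hn : 2 ≤ n) {first last : Fin n}
    (hfirst : first.val = 0) (hlast : last.val = n - 1) :
    (fun i : Fin n => if i.val = 0 then (-1 : ℝ) else if i.val = n - 1 then 1 else 0) =
      Pi.single last 1 - Pi.single first 1 := by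
  funext i
  simp only [Pi.sub_apply, Pi.single_apply, Fin.ext_iff, hfirst, hlast]
  split_ifs <;> first | omega | norm_num

/-- Energy stability of the upwind SBP-SAT semidiscretization of the advection
equation with homogeneous boundary data: the discrete energy `uᵀHu` is
nonincreasing (its derivative is `≤ 0`) whenever `τ ≤ -1/2`. -/
theorem stmt_0 (n : ℕ) (hn : 2 ≤ n)
    (H Qm : Matrix (Fin n) (Fin n) ℝ)
    (hH : H.PosDef) (hQ : (Qm + Qmᵀ).PosSemidef)
    (B : Matrix (Fin n) (Fin n) ℝ)
    (hB : B = Matrix.diagonal (fun i =>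
      if i.val = 0 then (-1 : ℝ) else if i.val = n - 1 then 1 else 0))
    (Dm : Matrix (Fin n) (Fin n) ℝ)
    (hDm : Dm = H⁻¹ * (Qm + (1/2 : ℝ) • B))
    (e₀ : Fin n → ℝ) (he₀ : e₀ = fun i => if i.val = 0 then 1 else 0)
    (τ : ℝ) (hτ : τ ≤ -1/2)
    (u : ℝ → Fin n → ℝ)
    (hu : ∀ t : ℝ, HasDerivAt u
      (-(Dm *ᵥ u t) + (τ * u t ⟨0, by omega⟩) • (H⁻¹ *ᵥ e₀)) t) :
    (∀ t : ℝ, deriv (fun s => u s ⬝ᵥ (H *ᵥ u s)) t ≤ 0) ∧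
      Antitone (fun t => u t ⬝ᵥ (H *ᵥ u t)) := by
  set first : Fin n := ⟨0, by omega⟩
  set last : Fin n := ⟨n - 1, by omega⟩
  have he₀_single : e₀ = Pi.single first 1 := by
    rw [he₀]
    funext i
    simp only [Pi.single_apply, first, Fin.ext_iff]
  have hrate : ∀ t, HasDerivAt (fun s => u s ⬝ᵥ (H *ᵥ u s))
      (-(u t ⬝ᵥ ((Qm + Qmᵀ) *ᵥ u t)) - u t last ^ 2 + (1 + 2 * τ) * u t first ^ 2) t := by
    intro t
    convert (isHermitian_iff_isSymm.1 hH.isHermitian).hasDerivAt_dotProduct_mulVec_self (hu t)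
      using 1
    rw [hDm, energy_rate_upwind_sbp_sat ((isUnit_iff_isUnit_det H).1 hH.isUnit), hB,
      boundary_diagonal_eq_single_sub_single hn (first := first) (last := last) rfl rfl,
      dotProduct_diagonal_single_sub_single_mulVec, he₀_single, dotProduct_single]
    ring
  have hrate_nonpos : ∀ t,
      -(u t ⬝ᵥ ((Qm + Qmᵀ) *ᵥ u t)) - u t last ^ 2 + (1 + 2 * τ) * u t first ^ 2 ≤ 0 :=
    fun t => by
      have hQv : 0 ≤ u t ⬝ᵥ ((Qm + Qmᵀ) *ᵥ u t) := by
        simpa using hQ.dotProduct_mulVec_nonneg (u t)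
      linarith [sq_nonneg (u t last),
        mul_nonpos_of_nonpos_of_nonneg (by linarith : 1 + 2 * τ ≤ 0) (sq_nonneg (u t first))]
  exact ⟨fun t => (hrate t).deriv ▸ hrate_nonpos t,
    antitone_of_hasDerivAt_nonpos hrate hrate_nonpos⟩
end

section
/- Let T > 0, α₀ ≥ 0 and α₁ ≤ 0. Suppose U, V : [0,1] × [0,T] → ℝ are continuously differentiable and satisfy the first order hyperbolic system ∂ₜU + ∂ₓV = 0 and ∂ₜV + ∂ₓU = 0 on [0,1] × [0,T], together with the homogeneous boundary conditions U(0,t) + α₀ V(0,t) = 0 and U(1,t) + α₁ V(1,t) = 0 for all t ∈ [0,T]. Then the energy E(t) = ∫₀¹ (U(x,t)² + V(x,t)²) dx satisfies E'(t) = −2α₀ V(0,t)² + 2α₁ V(1,t)² ≤ 0 for all t ∈ (0,T); in particular E is nonincreasing. -/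
/-!
Differentiating under the integral sign and using the equations, the energy density satisfies
`∂ₜ(U² + V²) = 2U Uₜ + 2V Vₜ = -2(U Vₓ + V Uₓ) = -∂ₓ(2UV)`, so `E'(t)` is the boundary flux
`2U(0,t)V(0,t) - 2U(1,t)V(1,t)`. The boundary conditions turn it into
`-2α₀V(0,t)² + 2α₁V(1,t)²`, which is `≤ 0` by the sign conditions on `α₀, α₁`;
a function with nonpositive derivative is nonincreasing.
-/

open MeasureTheory Set Function

section PartialDerivatives

variable {E : Type*} [NormedAddCommGroup E] [NormedSpace ℝ E] {f : ℝ → ℝ → E} {x t : ℝ}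

theorem hasDerivAt_uncurry_right (hf : DifferentiableAt ℝ (uncurry f) (x, t)) :
    HasDerivAt (f x) (fderiv ℝ (uncurry f) (x, t) (0, 1)) t := by
  simpa [comp_def] using
    hf.hasFDerivAt.comp_hasDerivAt t ((hasDerivAt_const t x).prodMk (hasDerivAt_id t))

theorem hasDerivAt_uncurry_left (hf : DifferentiableAt ℝ (uncurry f) (x, t)) :
    HasDerivAt (fun y ↦ f y t) (fderiv ℝ (uncurry f) (x, t) (1, 0)) x := by
  simpa [comp_def] using
    hf.hasFDerivAt.comp_hasDerivAt x ((hasDerivAt_id x).prodMk (hasDerivAt_const x t))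

theorem continuous_deriv_right (hf : ContDiff ℝ 1 (uncurry f)) :
    Continuous fun p : ℝ × ℝ ↦ deriv (f p.1) p.2 := by
  have hderiv : (fun p : ℝ × ℝ ↦ deriv (f p.1) p.2) = fun p ↦ fderiv ℝ (uncurry f) p (0, 1) :=
    funext fun p ↦ (hasDerivAt_uncurry_right (hf.differentiable one_ne_zero p)).deriv
  rw [hderiv]
  exact (hf.continuous_fderiv one_ne_zero).clm_apply continuous_const

theorem continuous_deriv_left (hf : ContDiff ℝ 1 (uncurry f)) :
    Continuous fun p : ℝ × ℝ ↦ deriv (fun y ↦ f y p.2) p.1 := by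
  have hderiv : (fun p : ℝ × ℝ ↦ deriv (fun y ↦ f y p.2) p.1) =
      fun p ↦ fderiv ℝ (uncurry f) p (1, 0) :=
    funext fun p ↦ (hasDerivAt_uncurry_left (hf.differentiable one_ne_zero p)).deriv
  rw [hderiv]
  exact (hf.continuous_fderiv one_ne_zero).clm_apply continuous_const

theorem hasDerivAt_intervalIntegral_of_contDiff {G : ℝ → ℝ → E} (hG : ContDiff ℝ 1 (uncurry G))
    (a b t : ℝ) :
    HasDerivAt (fun s ↦ ∫ x in a..b, G x s) (∫ x in a..b, deriv (G x) t) t := by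
  have hGc : Continuous (uncurry G) := hG.continuous
  have hG'c := continuous_deriv_right hG
  have hslice : ∀ s, Continuous fun x ↦ G x s := fun s ↦
    hGc.comp (continuous_id.prodMk continuous_const)
  obtain ⟨C, hC⟩ : ∃ C, ∀ p ∈ uIcc a b ×ˢ Metric.closedBall t 1, ‖deriv (G p.1) p.2‖ ≤ C :=
    (isCompact_uIcc.prod (isCompact_closedBall t 1)).exists_bound_of_continuousOn
      hG'c.continuousOn
  refine (intervalIntegral.hasDerivAt_integral_of_dominated_loc_of_deriv_le
    (bound := fun _ ↦ C) (Metric.ball_mem_nhds t one_pos)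
    (.of_forall fun s ↦ (hslice s).aestronglyMeasurable) ((hslice t).intervalIntegrable a b)
    (hG'c.comp (continuous_id.prodMk continuous_const)).aestronglyMeasurable
    (.of_forall fun x hx s hs ↦
      hC (x, s) ⟨uIoc_subset_uIcc hx, Metric.ball_subset_closedBall hs⟩)
    intervalIntegrable_const (.of_forall fun x _ s _ ↦ ?_)).2
  exact (hasDerivAt_uncurry_right (hG.differentiable one_ne_zero (x, s))).differentiableAt
    |>.hasDerivAt

end PartialDerivatives

theorem hasDerivAt_integral_sq_add_sq {U V : ℝ → ℝ → ℝ} (hU : ContDiff ℝ 1 (uncurry U))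
    (hV : ContDiff ℝ 1 (uncurry V)) {a b t : ℝ}
    (hUt : ∀ x ∈ uIcc a b, deriv (U x) t + deriv (fun y ↦ V y t) x = 0)
    (hVt : ∀ x ∈ uIcc a b, deriv (V x) t + deriv (fun y ↦ U y t) x = 0) :
    HasDerivAt (fun s ↦ ∫ x in a..b, U x s ^ 2 + V x s ^ 2)
      (2 * (U a t * V a t - U b t * V b t)) t := by
  have hUd := hU.differentiable one_ne_zero
  have hVd := hV.differentiable one_ne_zero
  have hUx : ∀ x, HasDerivAt (fun y ↦ U y t) (deriv (fun y ↦ U y t) x) x := fun x ↦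
    (hasDerivAt_uncurry_left (hUd (x, t))).differentiableAt.hasDerivAt
  have hVx : ∀ x, HasDerivAt (fun y ↦ V y t) (deriv (fun y ↦ V y t) x) x := fun x ↦
    (hasDerivAt_uncurry_left (hVd (x, t))).differentiableAt.hasDerivAt
  have hdensity : EqOn (fun x ↦ deriv (fun s ↦ U x s ^ 2 + V x s ^ 2) t)
      (fun x ↦ -2 * (deriv (fun y ↦ U y t) x * V x t + U x t * deriv (fun y ↦ V y t) x))
      (uIcc a b) := by
    intro x hx
    have hUs := (hasDerivAt_uncurry_right (hUd (x, t))).differentiableAt.hasDerivAt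
    have hVs := (hasDerivAt_uncurry_right (hVd (x, t))).differentiableAt.hasDerivAt
    refine ((hUs.pow 2).add (hVs.pow 2)).deriv.trans ?_
    linear_combination (2 * U x t) * hUt x hx + (2 * V x t) * hVt x hx
  have hflux := intervalIntegral.integral_deriv_mul_eq_sub (fun x _ ↦ hUx x) (fun x _ ↦ hVx x)
    (((continuous_deriv_left hU).comp (continuous_id.prodMk continuous_const)).intervalIntegrable
      a b)
    (((continuous_deriv_left hV).comp (continuous_id.prodMk continuous_const)).intervalIntegrable
      a b)
  refine (hasDerivAt_intervalIntegral_of_contDiff (G := fun x s ↦ U x s ^ 2 + V x s ^ 2)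
    ((hU.pow 2).add (hV.pow 2)) a b t).congr_deriv ?_
  rw [intervalIntegral.integral_congr hdensity, intervalIntegral.integral_const_mul, hflux]
  ring

theorem stmt_2_general (T : ℝ) (α₀ α₁ : ℝ) (hα₀ : 0 ≤ α₀) (hα₁ : α₁ ≤ 0)
    (U V : ℝ → ℝ → ℝ)
    (hU : ContDiff ℝ 1 (fun p : ℝ × ℝ => U p.1 p.2))
    (hV : ContDiff ℝ 1 (fun p : ℝ × ℝ => V p.1 p.2))
    (hPDE1 : ∀ x ∈ Set.Icc (0:ℝ) 1, ∀ t ∈ Set.Icc 0 T,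
      deriv (fun s => U x s) t + deriv (fun y => V y t) x = 0)
    (hPDE2 : ∀ x ∈ Set.Icc (0:ℝ) 1, ∀ t ∈ Set.Icc 0 T,
      deriv (fun s => V x s) t + deriv (fun y => U y t) x = 0)
    (hbc0 : ∀ t ∈ Set.Icc (0:ℝ) T, U 0 t + α₀ * V 0 t = 0)
    (hbc1 : ∀ t ∈ Set.Icc (0:ℝ) T, U 1 t + α₁ * V 1 t = 0) :
    (∀ t ∈ Set.Ioo (0:ℝ) T,
      HasDerivAt (fun s => ∫ x in (0:ℝ)..1, ((U x s)^2 + (V x s)^2))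
        (-2*α₀*(V 0 t)^2 + 2*α₁*(V 1 t)^2) t ∧
      -2*α₀*(V 0 t)^2 + 2*α₁*(V 1 t)^2 ≤ 0) ∧
    AntitoneOn (fun t => ∫ x in (0:ℝ)..1, ((U x t)^2 + (V x t)^2))
      (Set.Icc 0 T) := by
  have hrate : ∀ t ∈ Ioo 0 T, HasDerivAt (fun s ↦ ∫ x in (0:ℝ)..1, U x s ^ 2 + V x s ^ 2)
      (-2 * α₀ * V 0 t ^ 2 + 2 * α₁ * V 1 t ^ 2) t := by
    intro t ht
    have ht' := Ioo_subset_Icc_self ht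
    have hx : ∀ x ∈ uIcc (0 : ℝ) 1, x ∈ Icc 0 1 := by simp
    refine (hasDerivAt_integral_sq_add_sq hU hV (fun x hx' ↦ hPDE1 x (hx x hx') t ht')
      (fun x hx' ↦ hPDE2 x (hx x hx') t ht')).congr_deriv ?_
    linear_combination (2 * V 0 t) * hbc0 t ht' - (2 * V 1 t) * hbc1 t ht'
  have hdissipative : ∀ t, -2 * α₀ * V 0 t ^ 2 + 2 * α₁ * V 1 t ^ 2 ≤ 0 := fun t ↦ by
    nlinarith [mul_nonneg hα₀ (sq_nonneg (V 0 t)),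
      mul_nonpos_of_nonpos_of_nonneg hα₁ (sq_nonneg (V 1 t))]
  refine ⟨fun t ht ↦ ⟨hrate t ht, hdissipative t⟩, ?_⟩
  have hcont : Continuous fun s ↦ ∫ x in (0:ℝ)..1, U x s ^ 2 + V x s ^ 2 :=
    continuous_iff_continuousAt.2 fun t ↦ (hasDerivAt_intervalIntegral_of_contDiff
      (G := fun x s ↦ U x s ^ 2 + V x s ^ 2) ((hU.pow 2).add (hV.pow 2)) 0 1 t).continuousAt
  refine antitoneOn_of_deriv_nonpos (convex_Icc 0 T) hcont.continuousOn ?_ ?_ <;>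
    rw [interior_Icc]
  · exact fun t ht ↦ (hrate t ht).differentiableAt.differentiableWithinAt
  · exact fun t ht ↦ (hrate t ht).deriv ▸ hdissipative t

/-- Energy estimate for the first order hyperbolic system `Uₜ + Vₓ = 0`,
`Vₜ + Uₓ = 0` with boundary conditions `U(0,t) + α₀V(0,t) = 0`,
`U(1,t) + α₁V(1,t) = 0`: the energy `E(t) = ∫₀¹ U² + V² dx` satisfies
`E'(t) = -2α₀V(0,t)² + 2α₁V(1,t)² ≤ 0` and is nonincreasing. -/
theorem stmt_2 (T : ℝ) (hT : 0 < T) (α₀ α₁ : ℝ) (hα₀ : 0 ≤ α₀) (hα₁ : α₁ ≤ 0)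
    (U V : ℝ → ℝ → ℝ)
    (hU : ContDiff ℝ 1 (fun p : ℝ × ℝ => U p.1 p.2))
    (hV : ContDiff ℝ 1 (fun p : ℝ × ℝ => V p.1 p.2))
    (hPDE1 : ∀ x ∈ Set.Icc (0:ℝ) 1, ∀ t ∈ Set.Icc 0 T,
      deriv (fun s => U x s) t + deriv (fun y => V y t) x = 0)
    (hPDE2 : ∀ x ∈ Set.Icc (0:ℝ) 1, ∀ t ∈ Set.Icc 0 T,
      deriv (fun s => V x s) t + deriv (fun y => U y t) x = 0)
    (hbc0 : ∀ t ∈ Set.Icc (0:ℝ) T, U 0 t + α₀ * V 0 t = 0)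
    (hbc1 : ∀ t ∈ Set.Icc (0:ℝ) T, U 1 t + α₁ * V 1 t = 0) :
    (∀ t ∈ Set.Ioo (0:ℝ) T,
      HasDerivAt (fun s => ∫ x in (0:ℝ)..1, ((U x s)^2 + (V x s)^2))
        (-2*α₀*(V 0 t)^2 + 2*α₁*(V 1 t)^2) t ∧
      -2*α₀*(V 0 t)^2 + 2*α₁*(V 1 t)^2 ≤ 0) ∧
    AntitoneOn (fun t => ∫ x in (0:ℝ)..1, ((U x t)^2 + (V x t)^2))
      (Set.Icc 0 T) :=
  stmt_2_general T α₀ α₁ hα₀ hα₁ U V hU hV hPDE1 hPDE2 hbc0 hbc1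
end

section
/- Let α₀ ≥ 0, τ₁ ≤ 0 and τ₂ ∈ ℝ satisfy (α₀τ₁ − τ₂ − 1)² + 4α₀τ₁ ≤ 0. Then for all real numbers u, v: 2uv + 2τ₁ u (u + α₀ v) + 2τ₂ v (u + α₀ v) ≤ 0. -/
/-- Nonpositivity of the inflow boundary term `BT₀` in the energy rate of the
upwind SBP-SAT semidiscretization of the hyperbolic system, under the
stability condition `(α₀τ₁ - τ₂ - 1)² + 4α₀τ₁ ≤ 0`. -/
theorem stmt_3 (α₀ τ₁ τ₂ : ℝ) (hα₀ : 0 ≤ α₀) (hτ₁ : τ₁ ≤ 0)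
    (hst : (α₀*τ₁ - τ₂ - 1)^2 + 4*α₀*τ₁ ≤ 0) :
    ∀ u v : ℝ, 2*u*v + 2*τ₁*u*(u + α₀*v) + 2*τ₂*v*(u + α₀*v) ≤ 0 := by
  intro u v
  rcases eq_or_lt_of_le hτ₁ with h | h
  · subst h
    have h3 : τ₂ = -1 := by nlinarith [sq_nonneg (τ₂ + 1)]
    subst h3
    nlinarith [mul_nonneg hα₀ (sq_nonneg v)]
  · nlinarith [sq_nonneg (2*τ₁*u + (1 + α₀*τ₁ + τ₂)*v), mul_nonneg hα₀ (sq_nonneg v), mul_pos (neg_pos.mpr h) (neg_pos.mpr h), sq_nonneg v]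
end

section
/- Let α₁ ≤ 0, τ₃ ≤ 0 and τ₄ ∈ ℝ satisfy (α₁τ₃ − τ₄ + 1)² − 4α₁τ₃ ≤ 0. Then for all real numbers u, v: −2uv + 2τ₃ u (u + α₁ v) + 2τ₄ v (u + α₁ v) ≤ 0. -/
/-- Nonpositivity of the outflow boundary term in the energy rate of the
upwind SBP-SAT semidiscretization of the hyperbolic system, under the
stability condition `(α₁τ₃ - τ₄ + 1)² - 4α₁τ₃ ≤ 0`. -/
theorem stmt_4 (α₁ τ₃ τ₄ : ℝ) (hα₁ : α₁ ≤ 0) (hτ₃ : τ₃ ≤ 0)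
    (hst : (α₁*τ₃ - τ₄ + 1)^2 - 4*α₁*τ₃ ≤ 0) :
    ∀ u v : ℝ, -2*u*v + 2*τ₃*u*(u + α₁*v) + 2*τ₄*v*(u + α₁*v) ≤ 0 := by
  intro u v
  rcases lt_or_eq_of_le hτ₃ with h | h
  · nlinarith [sq_nonneg (2*τ₃*u + (α₁*τ₃+τ₄-1)*v), mul_nonneg (sq_nonneg v) (neg_nonneg.mpr hst)]
  · subst h
    have hτ₄ : τ₄ = 1 := by nlinarith [sq_nonneg (τ₄ - 1)]
    subst hτ₄
    nlinarith [mul_nonpos_of_nonpos_of_nonneg hα₁ (sq_nonneg v)]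
end

section
/- Let κ₂ = (−5+√33)/4 and τ ∈ ℝ, and let C₃ be the 2×2 real matrix with first row (−(12/5)τ, −1 − (12/5)τ + κ₂) and second row (0, −9/13 + (5/13)κ₂ + (4/13)κ₂²). Then det(C₃) = 3τ(3 + 5√33)/65. In particular, det(C₃) ≠ 0 for every τ ≤ −1/2, i.e., the determinant condition is satisfied for all stable penalty parameters. -/
open Matrix

/-- The determinant of the boundary system matrix `C₃` (at `s̃ = 0`) of the
third order upwind SBP-SAT discretization equals `3τ(3+5√33)/65`, which is
nonzero for every stable penalty parameter `τ ≤ -1/2`. -/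
theorem stmt_9 (τ κ₂ : ℝ) (hκ₂ : κ₂ = (-5 + Real.sqrt 33)/4)
    (C₃ : Matrix (Fin 2) (Fin 2) ℝ)
    (hC : C₃ = !![-(12/5)*τ, -1 - (12/5)*τ + κ₂;
                  0, -9/13 + (5/13)*κ₂ + (4/13)*κ₂^2]) :
    C₃.det = 3*τ*(3 + 5*Real.sqrt 33)/65 ∧ (τ ≤ -1/2 → C₃.det ≠ 0) := by
  have h33 : Real.sqrt 33 ^ 2 = 33 := Real.sq_sqrt (by norm_num)
  have hpos : (0:ℝ) < Real.sqrt 33 := Real.sqrt_pos.mpr (by norm_num)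
  have hdet : C₃.det = 3*τ*(3 + 5*Real.sqrt 33)/65 := by
    rw [hC, Matrix.det_fin_two_of, hκ₂]
    ring_nf
    rw [h33]
    ring
  refine ⟨hdet, fun hτ h0 => ?_⟩
  rw [hdet] at h0
  have : 3*τ*(3 + 5*Real.sqrt 33) < 0 := by nlinarith
  have := div_ne_zero (ne_of_lt this) (by norm_num : (65:ℝ) ≠ 0)
  exact this h0
end

section
/- Let κ₂ = (−5+√33)/4, let τ ∈ ℝ with τ ≠ 0, and let C₃ be the 2×2 real matrix with first row (−(12/5)τ, −1 − (12/5)τ + κ₂) and second row (0, −9/13 + (5/13)κ₂ + (4/13)κ₂²). Then for every c ∈ ℝ, the linear system C₃ (σ₁, σ₂)ᵀ = (c/2, −5c/26)ᵀ has the unique solution σ₁ = −10(1+τ)c / ((3+5√33)τ), σ₂ = 10c / (3+5√33). In particular σ₁ = 0 when τ = −1, and if c ≠ 0 then σ₁ = 0 if and only if τ = −1. -/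
open Matrix

/-- The unique solution of the boundary system `C₃(σ₁,σ₂)ᵀ = (c/2, -5c/26)ᵀ`
(at `s̃ = 0`) for the third order upwind SBP-SAT discretization, and the
characterization of the vanishing of the coefficient `σ₁` of the slowly
decaying mode: `σ₁ = 0` precisely at `τ = -1` (for `c ≠ 0`). -/
theorem stmt_10 (τ : ℝ) (hτ : τ ≠ 0) (κ₂ : ℝ) (hκ₂ : κ₂ = (-5 + Real.sqrt 33)/4)
    (C₃ : Matrix (Fin 2) (Fin 2) ℝ)
    (hC : C₃ = !![-(12/5)*τ, -1 - (12/5)*τ + κ₂;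
                  0, -9/13 + (5/13)*κ₂ + (4/13)*κ₂^2]) :
    ∀ c : ℝ,
      (∀ σ₁ σ₂ : ℝ, C₃ *ᵥ ![σ₁, σ₂] = ![c/2, -5*c/26] ↔
        (σ₁ = -10*(1 + τ)*c / ((3 + 5*Real.sqrt 33)*τ) ∧
         σ₂ = 10*c / (3 + 5*Real.sqrt 33))) ∧
      (τ = -1 → -10*(1 + τ)*c / ((3 + 5*Real.sqrt 33)*τ) = 0) ∧
      (c ≠ 0 → (-10*(1 + τ)*c / ((3 + 5*Real.sqrt 33)*τ) = 0 ↔ τ = -1)) := by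
  have hs0 : (0:ℝ) ≤ Real.sqrt 33 := Real.sqrt_nonneg _
  have hs2 : Real.sqrt 33 ^ 2 = 33 := Real.sq_sqrt (by norm_num)
  set s := Real.sqrt 33 with hsdef
  have hpos : (0:ℝ) < 3 + 5*s := by positivity
  have hne : (3 + 5*s) ≠ 0 := ne_of_gt hpos
  have hK : -9/13 + (5/13)*κ₂ + (4/13)*κ₂^2 = -(3 + 5*s)/52 := by
    rw [hκ₂]; linear_combination (1/52 : ℝ) * hs2
  have hKne : -9/13 + (5/13)*κ₂ + (4/13)*κ₂^2 ≠ 0 := by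
    rw [hK]; exact ne_of_lt (by linarith)
  have haτ : -(12/5)*τ ≠ 0 := mul_ne_zero (by norm_num) hτ
  intro c
  set σ₁' := -10*(1 + τ)*c / ((3 + 5*s)*τ) with hσ₁'
  set σ₂' := 10*c / (3 + 5*s) with hσ₂'
  have E1 : -(12/5)*τ * σ₁' + (-1 - (12/5)*τ + κ₂) * σ₂' = c/2 := by
    rw [hσ₁', hσ₂', hκ₂]; field_simp; ring
  have E2 : (-9/13 + (5/13)*κ₂ + (4/13)*κ₂^2) * σ₂' = -5*c/26 := by
    rw [hK, hσ₂']; field_simp; ring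
  refine ⟨?_, ?_, ?_⟩
  · intro σ₁ σ₂
    subst hC
    rw [funext_iff]
    simp only [Fin.forall_fin_two, Matrix.mulVec, dotProduct,
      Fin.sum_univ_two, Matrix.cons_val', Matrix.cons_val_zero, Matrix.cons_val_one,
      Matrix.head_cons, Matrix.empty_val', Matrix.cons_val_fin_one, Matrix.head_fin_const,
      Matrix.of_apply]
    constructor
    · rintro ⟨h1, h2⟩
      have hσ₂ : σ₂ = σ₂' := by
        apply mul_left_cancel₀ hKne
        linear_combination h2 - E2
      refine ⟨?_, hσ₂⟩
      rw [hσ₂] at h1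
      apply mul_left_cancel₀ haτ
      linear_combination h1 - E1
    · rintro ⟨h1, h2⟩
      subst h1 h2
      constructor
      · linear_combination E1
      · linear_combination E2
  · intro h
    rw [hσ₁', h]
    ring_nf
  · intro hc
    constructor
    · intro h
      rw [hσ₁'] at h
      have hden : (3 + 5*s)*τ ≠ 0 := mul_ne_zero hne hτ
      have hnum : -10*(1 + τ)*c = 0 := (div_eq_zero_iff.mp h).resolve_right hden
      have h1τ : 1 + τ = 0 := by
        by_contra hτ1
        exact mul_ne_zero (mul_ne_zero (by norm_num : (-10:ℝ) ≠ 0) hτ1) hc hnum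
      linarith
    · intro h
      rw [hσ₁', h]
      ring_nf
end

section
/- Let u : ℝ → ℝ be five times continuously differentiable in a neighborhood of a point x. Define, for h > 0: β₁(h) = (u(x+h) − u(x))², β₂(h) = (u(x) − u(x−h))², β₃(h) = (13/12)(u(x) − 2u(x−h) + u(x−2h))² + (1/4)(5u(x) − 8u(x−h) + 3u(x−2h))², and τ(h) = (u(x+h) − 3u(x) + 3u(x−h) − u(x−2h))². Then as h → 0⁺: β₁(h) = u'(x)²h² + u'(x)u''(x)h³ + ((1/4)u''(x)² + (1/3)u'(x)u'''(x))h⁴ + O(h⁵); β₂(h) = u'(x)²h² − u'(x)u''(x)h³ + ((1/4)u''(x)² + (1/3)u'(x)u'''(x))h⁴ + O(h⁵); β₃(h) = u'(x)²h² + 2u'(x)u''(x)h³ + ((25/12)u''(x)² − (32/12)u'(x)u'''(x))h⁴ + O(h⁵); and τ(h) = u'''(x)²h⁶ + O(h⁷). -/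
/-!
Expand `u` at the stencil points `x + h`, `x - h`, `x - 2h` by Taylor's theorem to third order,
with an `O(h⁴)` remainder. Each indicator is built from squares of stencil combinations `F` with
`F = G + O(h⁴)` for an explicit polynomial `G = O(h^m)` (`m = 1` for the `βᵢ`, `m = 3` for `τ`),
so `F² - G² = (F - G)(F + G) = O(h^(m+4))`; the claimed coefficients are those of `G²`, the
remaining terms of which are `O(h⁵)`.
-/

open Asymptotics Topology

open Filter Finset
open scoped Nat

theorem isBigO_pow_pow_of_le {𝕜 : Type*} [NormedDivisionRing 𝕜] {m n : ℕ} (hmn : m ≤ n) :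
    (fun x : 𝕜 => x ^ n) =O[𝓝 0] fun x => x ^ m :=
  hmn.lt_or_eq.elim (fun h => (isLittleO_pow_pow h).isBigO) fun h => h ▸ isBigO_refl _ _

theorem isBigO_pow_mul_of_continuousAt {𝕜 : Type*} [NormedField 𝕜] {q : 𝕜 → 𝕜}
    (n : ℕ) (hq : ContinuousAt q 0) : (fun x => x ^ n * q x) =O[𝓝 0] fun x => x ^ n :=
  ((isBigO_refl _ _).mul (hq.tendsto.isBigO_one 𝕜)).congr_right fun _ => mul_one _

theorem Asymptotics.IsBigO.comp_const_mul {𝕜 F : Type*} [NormedField 𝕜] [Norm F]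
    {E : 𝕜 → F} {n : ℕ} (hE : E =O[𝓝 0] fun x => x ^ n) (c : 𝕜) :
    (fun x => E (c * x)) =O[𝓝 0] fun x => x ^ n := by
  refine (hE.comp_tendsto ((continuous_const_mul c).tendsto' 0 0 (mul_zero c))).trans ?_
  exact ((isBigO_refl _ _).const_mul_left (c ^ n)).congr_left fun x => (mul_pow c x n).symm

theorem isBigO_sq_sub_sq {𝕜 : Type*} [NormedField 𝕜] {F G : 𝕜 → 𝕜} {m n : ℕ}
    (hFG : (fun x => F x - G x) =O[𝓝 0] fun x => x ^ (m + n))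
    (hG : G =O[𝓝 0] fun x => x ^ m) :
    (fun x => F x ^ 2 - G x ^ 2) =O[𝓝 0] fun x => x ^ (2 * m + n) := by
  have hsum : (fun x => F x + G x) =O[𝓝 0] fun x => x ^ m :=
    ((hFG.trans (isBigO_pow_pow_of_le (by omega))).add (hG.const_mul_left 2)).congr_left
      fun x => by ring
  exact (hFG.mul hsum).congr (fun x => by ring) fun x => by ring

theorem ContDiffAt.isLittleO_sub_taylor {E : Type*} [NormedAddCommGroup E] [NormedSpace ℝ E]
    {f : ℝ → E} {x₀ : ℝ} {n : ℕ} (hf : ContDiffAt ℝ n f x₀) :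
    (fun x => f x - ∑ k ∈ range (n + 1),
        ((k ! : ℝ)⁻¹ * (x - x₀) ^ k) • iteratedDeriv k f x₀)
      =o[𝓝 x₀] fun x => (x - x₀) ^ n := by
  obtain ⟨s, hs, hfs⟩ := hf.contDiffOn le_rfl (by simp)
  obtain ⟨ε, hε, hball⟩ := Metric.mem_nhds_iff.1 hs
  have := taylor_isLittleO (convex_ball x₀ ε) (Metric.mem_ball_self hε) (hfs.mono hball)
  rw [nhdsWithin_eq_nhds.2 (Metric.ball_mem_nhds x₀ hε)] at this
  refine this.congr_left fun x => ?_
  rw [taylor_within_apply]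
  refine congrArg (f x - ·) (sum_congr rfl fun k _ => ?_)
  rw [iteratedDerivWithin_of_isOpen Metric.isOpen_ball (Metric.mem_ball_self hε)]

theorem ContDiffAt.isBigO_sub_taylor {E : Type*} [NormedAddCommGroup E] [NormedSpace ℝ E]
    {f : ℝ → E} {x₀ : ℝ} {n : ℕ} (hf : ContDiffAt ℝ (n + 1) f x₀) :
    (fun h => f (x₀ + h) - ∑ k ∈ range (n + 1),
        ((k ! : ℝ)⁻¹ * h ^ k) • iteratedDeriv k f x₀)
      =O[𝓝 0] fun h => h ^ (n + 1) := by
  have hshift : Tendsto (x₀ + ·) (𝓝 (0 : ℝ)) (𝓝 x₀) := by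
    simpa using tendsto_const_nhds.add (tendsto_id (x := 𝓝 (0 : ℝ)))
  have hrem : (fun h => f (x₀ + h) - ∑ k ∈ range (n + 2),
      ((k ! : ℝ)⁻¹ * h ^ k) • iteratedDeriv k f x₀) =O[𝓝 0] fun h => h ^ (n + 1) :=
    ((ContDiffAt.isLittleO_sub_taylor (by exact_mod_cast hf)).comp_tendsto hshift).isBigO
      |>.congr (fun h => by simp) (fun h => by simp)
  set D := iteratedDeriv (n + 1) f x₀
  have hlast : (fun h : ℝ => (((n + 1)! : ℝ)⁻¹ * h ^ (n + 1)) • D)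
      =O[𝓝 0] fun h => h ^ (n + 1) :=
    isBigO_of_le' (c := ‖(((n + 1)! : ℝ))⁻¹‖ * ‖D‖) _ fun h =>
      (by rw [norm_smul, norm_mul]; ring : _ = _).le
  refine (hrem.add hlast).congr_left fun h => ?_
  rw [sum_range_succ _ (n + 1)]
  abel

theorem ContDiffAt.exists_taylor_cubic {u : ℝ → ℝ} {x : ℝ} (hu : ContDiffAt ℝ 4 u x) :
    ∃ E : ℝ → ℝ, (E =O[𝓝 0] fun h => h ^ 4) ∧ ∀ h, u (x + h) = u x + deriv u x * h
      + iteratedDeriv 2 u x / 2 * h ^ 2 + iteratedDeriv 3 u x / 6 * h ^ 3 + E h := by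
  refine ⟨_, ContDiffAt.isBigO_sub_taylor (n := 3) hu, fun h => ?_⟩
  simp [sum_range_succ, Nat.factorial]
  ring

section SmoothnessIndicators

variable {u E : ℝ → ℝ} {x d₁ d₂ d₃ : ℝ}
  (hu : ∀ h, u (x + h) = u x + d₁ * h + d₂ / 2 * h ^ 2 + d₃ / 6 * h ^ 3 + E h)
include hu

theorem apply_sub_eq (h : ℝ) :
    u (x - h) = u x - d₁ * h + d₂ / 2 * h ^ 2 - d₃ / 6 * h ^ 3 + E (-1 * h) := by
  rw [show x - h = x + -1 * h by ring, hu]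
  ring

theorem apply_sub_two_mul_eq (h : ℝ) :
    u (x - 2 * h) = u x - 2 * d₁ * h + 2 * d₂ * h ^ 2 - 4 / 3 * d₃ * h ^ 3 + E (-2 * h) := by
  rw [show x - 2 * h = x + -2 * h by ring, hu]
  ring

variable (hE : E =O[𝓝 0] fun h => h ^ 4)
include hE

theorem beta₁_sub_isBigO :
    (fun h : ℝ => (u (x+h) - u x)^2
        - (d₁^2 * h^2 + d₁ * d₂ * h^3 + ((1/4) * d₂^2 + (1/3) * d₁ * d₃) * h^4))
      =O[𝓝 0] fun h => h^5 := by
  have hsq := isBigO_sq_sub_sq (F := fun h => u (x + h) - u x)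
    (G := fun h => d₁ * h + d₂ / 2 * h ^ 2 + d₃ / 6 * h ^ 3) (m := 1) (n := 3)
    (hE.congr_left fun h => by rw [hu]; ring)
    ((isBigO_pow_mul_of_continuousAt (q := fun h => d₁ + d₂ / 2 * h + d₃ / 6 * h ^ 2) 1
      (by fun_prop)).congr_left fun h => by ring)
  have hpoly := isBigO_pow_mul_of_continuousAt
    (q := fun h => d₂ * d₃ / 6 + d₃ ^ 2 / 36 * h) 5 (by fun_prop)
  exact (hsq.add hpoly).congr_left fun h => by ring

theorem beta₂_sub_isBigO :
    (fun h : ℝ => (u x - u (x-h))^2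
        - (d₁^2 * h^2 - d₁ * d₂ * h^3 + ((1/4) * d₂^2 + (1/3) * d₁ * d₃) * h^4))
      =O[𝓝 0] fun h => h^5 := by
  have hsq := isBigO_sq_sub_sq (F := fun h => u x - u (x - h))
    (G := fun h => d₁ * h - d₂ / 2 * h ^ 2 + d₃ / 6 * h ^ 3) (m := 1) (n := 3)
    ((hE.comp_const_mul (-1)).neg_left.congr_left fun h => by rw [apply_sub_eq hu]; ring)
    ((isBigO_pow_mul_of_continuousAt (q := fun h => d₁ - d₂ / 2 * h + d₃ / 6 * h ^ 2) 1
      (by fun_prop)).congr_left fun h => by ring)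
  have hpoly := isBigO_pow_mul_of_continuousAt
    (q := fun h => -(d₂ * d₃ / 6) + d₃ ^ 2 / 36 * h) 5 (by fun_prop)
  exact (hsq.add hpoly).congr_left fun h => by ring

theorem beta₃_sub_isBigO :
    (fun h : ℝ => ((13/12) * (u x - 2*u (x-h) + u (x-2*h))^2
          + (1/4) * (5*u x - 8*u (x-h) + 3*u (x-2*h))^2)
        - (d₁^2 * h^2 + 2 * d₁ * d₂ * h^3
          + ((25/12) * d₂^2 - (32/12) * d₁ * d₃) * h^4))
      =O[𝓝 0] fun h => h^5 := by
  have hsqA := isBigO_sq_sub_sq (F := fun h => u x - 2 * u (x - h) + u (x - 2 * h))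
    (G := fun h => d₂ * h ^ 2 - d₃ * h ^ 3) (m := 1) (n := 3)
    (((hE.comp_const_mul (-1)).const_mul_left (-2)).add (hE.comp_const_mul (-2)) |>.congr_left
      fun h => by rw [apply_sub_eq hu, apply_sub_two_mul_eq hu]; ring)
    ((isBigO_pow_mul_of_continuousAt (q := fun h => d₂ * h - d₃ * h ^ 2) 1
      (by fun_prop)).congr_left fun h => by ring)
  have hsqB := isBigO_sq_sub_sq (F := fun h => 5 * u x - 8 * u (x - h) + 3 * u (x - 2 * h))
    (G := fun h => 2 * d₁ * h + 2 * d₂ * h ^ 2 - 8 / 3 * d₃ * h ^ 3) (m := 1) (n := 3)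
    (((hE.comp_const_mul (-1)).const_mul_left (-8)).add
      ((hE.comp_const_mul (-2)).const_mul_left 3) |>.congr_left
      fun h => by rw [apply_sub_eq hu, apply_sub_two_mul_eq hu]; ring)
    ((isBigO_pow_mul_of_continuousAt
      (q := fun h => 2 * d₁ + 2 * d₂ * h - 8 / 3 * d₃ * h ^ 2) 1 (by fun_prop)).congr_left
      fun h => by ring)
  have hpoly := isBigO_pow_mul_of_continuousAt
    (q := fun h => -(29 / 6 * d₂ * d₃) + 103 / 36 * d₃ ^ 2 * h) 5 (by fun_prop)
  refine ((hsqA.const_mul_left (13 / 12)).add (hsqB.const_mul_left (1 / 4)) |>.add hpoly)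
    |>.congr_left fun h => ?_
  ring

theorem tau_sub_isBigO :
    (fun h : ℝ => (u (x+h) - 3*u x + 3*u (x-h) - u (x-2*h))^2 - d₃^2 * h^6)
      =O[𝓝 0] fun h => h^7 := by
  have hsq := isBigO_sq_sub_sq
    (F := fun h => u (x + h) - 3 * u x + 3 * u (x - h) - u (x - 2 * h))
    (G := fun h => d₃ * h ^ 3) (m := 3) (n := 1)
    ((hE.add ((hE.comp_const_mul (-1)).const_mul_left 3)).sub (hE.comp_const_mul (-2))
      |>.congr_left fun h => by rw [hu, apply_sub_eq hu, apply_sub_two_mul_eq hu]; ring)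
    ((isBigO_pow_mul_of_continuousAt (q := fun _ => d₃) 3 continuousAt_const).congr_left
      fun h => by ring)
  exact hsq.congr_left fun h => by ring

end SmoothnessIndicators

/-- Taylor expansions of the WENO smoothness indicators `β₁, β₂, β₃` and the
global indicator `τ` of the fourth order upwind SBP-WENO scheme at a point
where `u` is five times continuously differentiable. -/
theorem stmt_17 (u : ℝ → ℝ) (x : ℝ) (hu : ContDiffAt ℝ 5 u x) :
    ((fun h : ℝ => (u (x+h) - u x)^2
        - ((deriv u x)^2 * h^2 + deriv u x * iteratedDeriv 2 u x * h^3
          + ((1/4) * (iteratedDeriv 2 u x)^2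
             + (1/3) * deriv u x * iteratedDeriv 3 u x) * h^4))
      =O[𝓝[>] (0:ℝ)] fun h => h^5) ∧
    ((fun h : ℝ => (u x - u (x-h))^2
        - ((deriv u x)^2 * h^2 - deriv u x * iteratedDeriv 2 u x * h^3
          + ((1/4) * (iteratedDeriv 2 u x)^2
             + (1/3) * deriv u x * iteratedDeriv 3 u x) * h^4))
      =O[𝓝[>] (0:ℝ)] fun h => h^5) ∧
    ((fun h : ℝ => ((13/12) * (u x - 2*u (x-h) + u (x-2*h))^2
          + (1/4) * (5*u x - 8*u (x-h) + 3*u (x-2*h))^2)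
        - ((deriv u x)^2 * h^2 + 2 * deriv u x * iteratedDeriv 2 u x * h^3
          + ((25/12) * (iteratedDeriv 2 u x)^2
             - (32/12) * deriv u x * iteratedDeriv 3 u x) * h^4))
      =O[𝓝[>] (0:ℝ)] fun h => h^5) ∧
    ((fun h : ℝ => (u (x+h) - 3*u x + 3*u (x-h) - u (x-2*h))^2
        - (iteratedDeriv 3 u x)^2 * h^6)
      =O[𝓝[>] (0:ℝ)] fun h => h^7) := by
  obtain ⟨E, hE, hTaylor⟩ :=
    (hu.of_le (by norm_num : (4 : WithTop ℕ∞) ≤ 5)).exists_taylor_cubic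
  exact ⟨(beta₁_sub_isBigO hTaylor hE).mono nhdsWithin_le_nhds,
    (beta₂_sub_isBigO hTaylor hE).mono nhdsWithin_le_nhds,
    (beta₃_sub_isBigO hTaylor hE).mono nhdsWithin_le_nhds,
    (tau_sub_isBigO hTaylor hE).mono nhdsWithin_le_nhds⟩
end

section
/- Let u : ℝ → ℝ be five times continuously differentiable in a neighborhood of a point x, and for h > 0 set ε = h², d⁽¹⁾ = 1/2, d⁽²⁾ = 1/4, d⁽³⁾ = 1/4, û⁽¹⁾(h) = (1/2)u(x) + (1/2)u(x+h), û⁽²⁾(h) = −(1/2)u(x−h) + (3/2)u(x), û⁽³⁾(h) = (1/3)u(x−2h) − (7/6)u(x−h) + (11/6)u(x), β₁(h) = (u(x+h) − u(x))², β₂(h) = (u(x) − u(x−h))², β₃(h) = (13/12)(u(x) − 2u(x−h) + u(x−2h))² + (1/4)(5u(x) − 8u(x−h) + 3u(x−2h))², τ(h) = (u(x+h) − 3u(x) + 3u(x−h) − u(x−2h))², α⁽ʲ⁾(h) = d⁽ʲ⁾(1 + τ(h)/(ε + β_j(h))) and w⁽ʲ⁾(h) = α⁽ʲ⁾(h)/(α⁽¹⁾(h)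 + α⁽²⁾(h) + α⁽³⁾(h)) for j = 1,2,3. Then as h → 0⁺: w⁽ʲ⁾(h) − d⁽ʲ⁾ = O(h⁴) for j = 1,2,3, and consequently Σ_{j=1}³ (w⁽ʲ⁾(h) − d⁽ʲ⁾) û⁽ʲ⁾(h) = O(h⁴). -/
open Asymptotics Topology

/-- The linear weights `d⁽¹⁾ = 1/2`, `d⁽²⁾ = d⁽³⁾ = 1/4` of the fourth order
upwind SBP-WENO interior flux. -/
noncomputable def wenoD : Fin 3 → ℝ := ![1/2, 1/4, 1/4]

/-- The substencil fluxes `û⁽¹⁾, û⁽²⁾, û⁽³⁾` of the fourth order upwind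
SBP-WENO interior flux, at the point `x` with grid spacing `h`. -/
noncomputable def wenoUhat (u : ℝ → ℝ) (x h : ℝ) : Fin 3 → ℝ :=
  ![(1/2)*u x + (1/2)*u (x+h),
    -(1/2)*u (x-h) + (3/2)*u x,
    (1/3)*u (x-2*h) - (7/6)*u (x-h) + (11/6)*u x]

/-- The smoothness indicators `β₁, β₂, β₃`. -/
noncomputable def wenoBeta (u : ℝ → ℝ) (x h : ℝ) : Fin 3 → ℝ :=
  ![(u (x+h) - u x)^2,
    (u x - u (x-h))^2,
    (13/12)*(u x - 2*u (x-h) + u (x-2*h))^2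
      + (1/4)*(5*u x - 8*u (x-h) + 3*u (x-2*h))^2]

/-- The global smoothness indicator `τ`. -/
noncomputable def wenoTau (u : ℝ → ℝ) (x h : ℝ) : ℝ :=
  (u (x+h) - 3*u x + 3*u (x-h) - u (x-2*h))^2

/-- The unnormalized nonlinear weights `α⁽ʲ⁾ = d⁽ʲ⁾(1 + τ/(ε + β_j))` with
regularization `ε = h²`. -/
noncomputable def wenoAlpha (u : ℝ → ℝ) (x h : ℝ) (j : Fin 3) : ℝ :=
  wenoD j * (1 + wenoTau u x h / (h^2 + wenoBeta u x h j))

/-- The normalized nonlinear WENO weights `w⁽ʲ⁾`. -/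
noncomputable def wenoW (u : ℝ → ℝ) (x h : ℝ) (j : Fin 3) : ℝ :=
  wenoAlpha u x h j / (∑ k : Fin 3, wenoAlpha u x h k)

/-!
The nonlinear weights are `d⁽ʲ⁾ + q⁽ʲ⁾` normalized, with `0 ≤ q⁽ʲ⁾ ≤ d⁽ʲ⁾ τ / ε`, so they differ
from the linear weights by at most `τ / ε = τ / h²`. The indicator `τ` is the square of the third
undivided difference `u(x+h) - 3u(x) + 3u(x-h) - u(x-2h)`, which is `O(h³)` because the stencil
annihilates quadratics (third order Taylor expansion). Hence `τ / h² = O(h⁴)`, and since the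
substencil fluxes stay bounded, so is the flux correction.
-/

open Filter Finset

theorem abs_div_sum_mul_one_add_div_sub_le {ι : Type*} [Fintype ι] {d β : ι → ℝ} {τ ε : ℝ}
    (hd : ∀ k, 0 ≤ d k) (hsum : ∑ k, d k = 1) (hβ : ∀ k, 0 ≤ β k) (hτ : 0 ≤ τ) (hε : 0 < ε)
    (j : ι) :
    |d j * (1 + τ / (ε + β j)) / ∑ k, d k * (1 + τ / (ε + β k)) - d j| ≤ τ / ε := by
  set q : ι → ℝ := fun k => d k * (τ / (ε + β k))
  have hq_nonneg (k : ι) : 0 ≤ q k := mul_nonneg (hd k) (div_nonneg hτ (by linarith [hβ k]))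
  have hq_le (k : ι) : q k ≤ d k * (τ / ε) :=
    mul_le_mul_of_nonneg_left (div_le_div_of_nonneg_left hτ hε (by linarith [hβ k])) (hd k)
  have hdj : d j ≤ 1 := hsum ▸ single_le_sum (fun k _ => hd k) (mem_univ j)
  have hQ : ∑ k, q k ≤ τ / ε :=
    calc ∑ k, q k ≤ ∑ k, d k * (τ / ε) := sum_le_sum fun k _ => hq_le k
      _ = τ / ε := by rw [← sum_mul, hsum, one_mul]
  have hQ_nonneg : 0 ≤ ∑ k, q k := sum_nonneg fun k _ => hq_nonneg k
  have hden : ∑ k, d k * (1 + τ / (ε + β k)) = 1 + ∑ k, q k := by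
    simp only [q, mul_add, mul_one, sum_add_distrib, hsum]
  have hdiff : d j * (1 + τ / (ε + β j)) / (1 + ∑ k, q k) - d j
      = (q j - d j * ∑ k, q k) / (1 + ∑ k, q k) := by
    field_simp
    ring
  rw [hden, hdiff, abs_div, abs_of_pos (a := 1 + ∑ k, q k) (by linarith)]
  -- `q j` and `d j * ∑ q` both lie in `[0, τ / ε]`
  calc |q j - d j * ∑ k, q k| / (1 + ∑ k, q k) ≤ |q j - d j * ∑ k, q k| :=
        div_le_self (abs_nonneg _) (by linarith)
    _ ≤ τ / ε := abs_sub_le_of_nonneg_of_le (hq_nonneg j)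
        ((hq_le j).trans (mul_le_of_le_one_left (div_nonneg hτ hε.le) hdj))
        (mul_nonneg (hd j) hQ_nonneg) ((mul_le_of_le_one_left hQ_nonneg hdj).trans hQ)

theorem exists_cubic_isBigO_sub {u : ℝ → ℝ} {x : ℝ} (hu : ContDiffAt ℝ 3 u x) :
    ∃ a b c : ℝ, (fun t => u (x + t) - (u x + a * t + b * t ^ 2 + c * t ^ 3))
      =O[𝓝 0] fun t => t ^ 3 := by
  obtain ⟨s, hs, hus⟩ := hu.contDiffOn le_rfl (by simp)
  obtain ⟨r, hr, hrs⟩ := Metric.mem_nhds_iff.1 hs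
  have htaylor := taylor_isLittleO (convex_ball x r) (Metric.mem_ball_self hr) (hus.mono hrs)
  rw [Metric.isOpen_ball.nhdsWithin_eq (Metric.mem_ball_self hr)] at htaylor
  have hshift : Tendsto (fun t => x + t) (𝓝 0) (𝓝 x) := by
    simpa using (continuous_const_add x).tendsto 0
  refine ⟨iteratedDerivWithin 1 u (Metric.ball x r) x,
    iteratedDerivWithin 2 u (Metric.ball x r) x / 2,
    iteratedDerivWithin 3 u (Metric.ball x r) x / 6, ?_⟩
  refine (htaylor.isBigO.comp_tendsto hshift).congr (fun t => ?_) (fun t => by simp)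
  simp only [Function.comp_apply, taylor_within_apply, sum_range_succ, sum_range_zero,
    smul_eq_mul, add_sub_cancel_left, iteratedDerivWithin_zero]
  norm_num [Nat.factorial]
  ring

theorem Asymptotics.IsBigO.comp_const_mul_pow {g : ℝ → ℝ} {n : ℕ}
    (hg : g =O[𝓝 0] fun t => t ^ n) (k : ℝ) :
    (fun t => g (k * t)) =O[𝓝 0] fun t => t ^ n := by
  have hk : Tendsto (fun t => k * t) (𝓝 0) (𝓝 0) := by
    simpa using (continuous_const_mul k).tendsto 0
  exact (hg.comp_tendsto hk).trans
    ((isBigO_const_mul_self (k ^ n) _ _).congr_left fun t => by simp [mul_pow])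

theorem isBigO_thirdDiff {u : ℝ → ℝ} {x : ℝ} (hu : ContDiffAt ℝ 3 u x) :
    (fun h => u (x + h) - 3 * u x + 3 * u (x - h) - u (x - 2 * h)) =O[𝓝 0] fun h => h ^ 3 := by
  obtain ⟨a, b, c, hR⟩ := exists_cubic_isBigO_sub hu
  set R := fun t => u (x + t) - (u x + a * t + b * t ^ 2 + c * t ^ 3)
  -- the stencil annihilates `1, t, t²` and sends `t³` to `6 h³`
  have hstencil (h : ℝ) : u (x + h) - 3 * u x + 3 * u (x - h) - u (x - 2 * h)
      = R h + 3 * R (-1 * h) - R (-2 * h) + 6 * c * h ^ 3 := by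
    have hx₁ : x + -1 * h = x - h := by ring
    have hx₂ : x + -2 * h = x - 2 * h := by ring
    simp only [R, hx₁, hx₂]
    ring
  simp only [hstencil]
  exact ((hR.add ((hR.comp_const_mul_pow (-1)).const_mul_left 3)).sub
    (hR.comp_const_mul_pow (-2))).add (isBigO_const_mul_self (6 * c) _ _)

theorem abs_wenoW_sub_wenoD_le (u : ℝ → ℝ) (x : ℝ) {h : ℝ} (hh : 0 < h) (j : Fin 3) :
    |wenoW u x h j - wenoD j| ≤ wenoTau u x h / h ^ 2 := by
  refine abs_div_sum_mul_one_add_div_sub_le (fun k => ?_) ?_ (fun k => ?_) (sq_nonneg _)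
    (by positivity) j
  · fin_cases k <;> norm_num [wenoD]
  · norm_num [wenoD, Fin.sum_univ_succ]
  · fin_cases k <;> simp only [wenoBeta, Fin.reduceFinMk, Matrix.cons_val] <;> positivity

theorem isBigO_wenoTau_div_sq {u : ℝ → ℝ} {x : ℝ} (hu : ContDiffAt ℝ 3 u x) :
    (fun h => wenoTau u x h / h ^ 2) =O[𝓝 0] fun h => h ^ 4 := by
  refine (((isBigO_thirdDiff hu).pow 2).mul (isBigO_refl (fun h : ℝ => (h ^ 2)⁻¹) _)).congr
    (fun h => by simp [wenoTau, div_eq_mul_inv]) (fun h => ?_)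
  rcases eq_or_ne h 0 with rfl | hh
  · simp
  · field_simp

theorem isBigO_wenoUhat_one {u : ℝ → ℝ} {x : ℝ} (hu : ContinuousAt u x) (j : Fin 3) :
    (fun h => wenoUhat u x h j) =O[𝓝 0] fun _ => (1 : ℝ) := by
  have h₁ : ContinuousAt (fun h => u (x + h)) 0 := hu.comp_of_eq (by fun_prop) (by simp)
  have h₂ : ContinuousAt (fun h => u (x - h)) 0 := hu.comp_of_eq (by fun_prop) (by simp)
  have h₃ : ContinuousAt (fun h => u (x - 2 * h)) 0 := hu.comp_of_eq (by fun_prop) (by simp)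
  refine ContinuousAt.tendsto (x := (0 : ℝ)) ?_ |>.isBigO_one ℝ
  fin_cases j
  · exact continuousAt_const.add (h₁.const_mul _)
  · exact (h₂.const_mul _).add continuousAt_const
  · exact ((h₃.const_mul _).sub (h₂.const_mul _)).add continuousAt_const

/-- In smooth regions the nonlinear WENO weights of the fourth order upwind
SBP-WENO scheme agree with the linear weights to `O(h⁴)`, and hence the WENO
flux deviates from the linear flux by `O(h⁴)`. -/
theorem stmt_18 (u : ℝ → ℝ) (x : ℝ) (hu : ContDiffAt ℝ 5 u x) :
    (∀ j : Fin 3,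
      (fun h : ℝ => wenoW u x h j - wenoD j) =O[𝓝[>] (0:ℝ)] fun h => h^4) ∧
    ((fun h : ℝ => ∑ j : Fin 3, (wenoW u x h j - wenoD j) * wenoUhat u x h j)
      =O[𝓝[>] (0:ℝ)] fun h => h^4) := by
  have hweights (j : Fin 3) :
      (fun h : ℝ => wenoW u x h j - wenoD j) =O[𝓝[>] (0:ℝ)] fun h => h^4 := by
    refine IsBigO.trans ?_
      ((isBigO_wenoTau_div_sq (hu.of_le (by norm_num))).mono nhdsWithin_le_nhds)
    refine IsBigO.of_bound' (eventually_nhdsWithin_of_forall fun h (hh : 0 < h) => ?_)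
    have hbound_nonneg : 0 ≤ wenoTau u x h / h ^ 2 := div_nonneg (sq_nonneg _) (sq_nonneg h)
    rw [Real.norm_eq_abs, Real.norm_of_nonneg hbound_nonneg]
    exact abs_wenoW_sub_wenoD_le u x hh j
  refine ⟨hweights, IsBigO.fun_sum fun j _ => ?_⟩
  simpa using (hweights j).mul ((isBigO_wenoUhat_one hu.continuousAt j).mono nhdsWithin_le_nhds)
end

section
/- Let n ≥ 1 and let Δ be the n × (n+1) real matrix with Δ_{i,i} = −1, Δ_{i,i+1} = 1 and all other entries zero. Let Λ₁, Λ₃ be (n+1)×(n+1) real diagonal matrices, Λ₂ an n×n real diagonal matrix, and δ₁, δ₂, δ₃ ∈ ℝ. For j = 1,2,3 define the diagonal matrix Λ_{js} of the same size as Λ_j by (Λ_{js})_{ii} = (1/2)(√((Λ_j)_{ii}² + δ_j²) − (Λ_j)_{ii}). Let R = ΔΔᵀΔ Λ₃ ΔᵀΔΔᵀ + ΔΔᵀ Λ₂ ΔΔᵀ + Δ Λ₁ Δᵀ and R_s = ΔΔᵀΔ Λ_{3s} ΔᵀΔΔᵀ + ΔΔᵀ Λ_{2s} ΔΔᵀ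 + Δ Λ_{1s} Δᵀ. Then R + R_s is a symmetric positive semidefinite n×n matrix. -/
open Matrix

lemma half_sum_nonneg (l d : ℝ) : 0 ≤ l + (1/2) * (Real.sqrt (l^2 + d^2) - l) := by
  have h : -l ≤ Real.sqrt (l^2 + d^2) := by
    have h1 : |l| ≤ Real.sqrt (l^2 + d^2) := by
      rw [← Real.sqrt_sq_eq_abs]
      exact Real.sqrt_le_sqrt (by nlinarith [sq_nonneg d])
    linarith [neg_abs_le l]
  linarith

/-- The stabilized symmetric part `R + R_s` of the upwind SBP-WENO operator is
symmetric positive semidefinite, where `R_s` is built from the diagonal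
matrices with entries `(1/2)(√(λ² + δ²) - λ)`. -/
theorem stmt_19 (n : ℕ) (hn : 1 ≤ n)
    (Δ : Matrix (Fin n) (Fin (n+1)) ℝ)
    (hΔ : Δ = Matrix.of fun i j =>
      if j.val = i.val then (-1 : ℝ) else if j.val = i.val + 1 then 1 else 0)
    (l₁ l₃ : Fin (n+1) → ℝ) (l₂ : Fin n → ℝ) (δ₁ δ₂ δ₃ : ℝ)
    (Λ₁ Λ₃ Λ₁s Λ₃s : Matrix (Fin (n+1)) (Fin (n+1)) ℝ)
    (Λ₂ Λ₂s : Matrix (Fin n) (Fin n) ℝ)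
    (hΛ₁ : Λ₁ = Matrix.diagonal l₁)
    (hΛ₂ : Λ₂ = Matrix.diagonal l₂)
    (hΛ₃ : Λ₃ = Matrix.diagonal l₃)
    (hΛ₁s : Λ₁s = Matrix.diagonal fun i =>
      (1/2) * (Real.sqrt ((l₁ i)^2 + δ₁^2) - l₁ i))
    (hΛ₂s : Λ₂s = Matrix.diagonal fun i =>
      (1/2) * (Real.sqrt ((l₂ i)^2 + δ₂^2) - l₂ i))
    (hΛ₃s : Λ₃s = Matrix.diagonal fun i =>
      (1/2) * (Real.sqrt ((l₃ i)^2 + δ₃^2) - l₃ i))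
    (R Rs : Matrix (Fin n) (Fin n) ℝ)
    (hR : R = Δ * Δᵀ * Δ * Λ₃ * Δᵀ * Δ * Δᵀ + Δ * Δᵀ * Λ₂ * Δ * Δᵀ + Δ * Λ₁ * Δᵀ)
    (hRs : Rs = Δ * Δᵀ * Δ * Λ₃s * Δᵀ * Δ * Δᵀ + Δ * Δᵀ * Λ₂s * Δ * Δᵀ
      + Δ * Λ₁s * Δᵀ) :
    (R + Rs).PosSemidef := by
  have key : R + Rs =
      (Δ * Δᵀ * Δ) * (Λ₃ + Λ₃s) * (Δ * Δᵀ * Δ)ᴴ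
      + (Δ * Δᵀ) * (Λ₂ + Λ₂s) * (Δ * Δᵀ)ᴴ
      + Δ * (Λ₁ + Λ₁s) * Δᴴ := by
    subst hR hRs
    simp only [conjTranspose_eq_transpose_of_trivial, transpose_mul, transpose_transpose,
      Matrix.mul_add, Matrix.add_mul, ← Matrix.mul_assoc]
    abel
  rw [key]
  have d3 : (Λ₃ + Λ₃s).PosSemidef := by
    rw [hΛ₃, hΛ₃s, diagonal_add]
    exact posSemidef_diagonal_iff.mpr fun i => half_sum_nonneg _ _
  have d2 : (Λ₂ + Λ₂s).PosSemidef := by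
    rw [hΛ₂, hΛ₂s, diagonal_add]
    exact posSemidef_diagonal_iff.mpr fun i => half_sum_nonneg _ _
  have d1 : (Λ₁ + Λ₁s).PosSemidef := by
    rw [hΛ₁, hΛ₁s, diagonal_add]
    exact posSemidef_diagonal_iff.mpr fun i => half_sum_nonneg _ _
  exact ((d3.mul_mul_conjTranspose_same _).add (d2.mul_mul_conjTranspose_same _)).add
    (d1.mul_mul_conjTranspose_same _)
end
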